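/- arXiv:1102.0092 — 3 statements merged into one kernel-verified Lean document; each statement's English description precedes it below -/
import Mathlib

section
/- Let C_1, C_2, α, β > 0 and let k : [0,∞) → ℝ solve the ODE k'(t) = C_1 k(1 - k^α) + C_2 k^{d+1} e^{-βt} with d ≥ 1. Then there exists δ > 0 (depending on C_1, C_2, α, β, d) such that whenever 0 < k(0) < δ, the solution k exists globally, and there exist constants C > 0 and ε = min{β, C_1 α/2} with |k(t) - 1| ≤ C e^{-ε t} for all t ≥ 0; in particular k(t) → 1 exponentially as t → ∞. -/
/-!
While `k ≤ 1` the right-hand side is at most `(C₁ + C₂) k`, so a small `k(0)` keeps `k` below `1`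
up to a time `T` after which the forcing `C₂ k^{d+1} e^{-βt}` is too weak to push `k` past `2`;
and `k` never drops below `k(0) ∈ (0, 1)`, where the right-hand side is positive. Between these
bounds the Bernoulli substitution `v = (k^{-α} - 1) e^{εt}` solves `v' = (ε - αC₁) v - G` with
`0 ≤ G` bounded because `ε ≤ β`, so `v` stays bounded, and `|k - 1| ≲ |k^{-α} - 1|` on `(0, 2]`.
-/

open Real Filter Set
open scoped Topology

theorem image_le_of_hasDerivAt_lt_of_eq_Icc {a b : ℝ} {f f' g g' : ℝ → ℝ}
    (hf : ∀ t ≥ a, HasDerivAt f (f' t) t) (hg : ∀ t ≥ a, HasDerivAt g (g' t) t)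
    (ha : f a ≤ g a) (hlt : ∀ t ∈ Ico a b, f t = g t → f' t < g' t) :
    ∀ t ∈ Icc a b, f t ≤ g t := fun _ ht =>
  image_le_of_deriv_right_lt_deriv_boundary'
    (fun x hx => (hf x hx.1).continuousAt.continuousWithinAt)
    (fun x hx => (hf x hx.1).hasDerivWithinAt) ha
    (fun x hx => (hg x hx.1).continuousAt.continuousWithinAt)
    (fun x hx => (hg x hx.1).hasDerivWithinAt) hlt ht

theorem image_le_of_hasDerivAt_lt_of_eq_Ici {a : ℝ} {f f' g g' : ℝ → ℝ}
    (hf : ∀ t ≥ a, HasDerivAt f (f' t) t) (hg : ∀ t ≥ a, HasDerivAt g (g' t) t)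
    (ha : f a ≤ g a) (hlt : ∀ t ≥ a, f t = g t → f' t < g' t) :
    ∀ t ≥ a, f t ≤ g t := fun b hb =>
  image_le_of_hasDerivAt_lt_of_eq_Icc hf hg ha (fun t ht => hlt t ht.1) b ⟨hb, le_rfl⟩

theorem exists_pos_abs_le_of_hasDerivAt_linear {v G : ℝ → ℝ} {a K : ℝ} (ha : a < 0)
    (hv : ∀ t ≥ 0, HasDerivAt v (a * v t - G t) t) (hG : ∀ t ≥ 0, 0 ≤ G t ∧ G t ≤ K) :
    ∃ B > 0, ∀ t ≥ 0, |v t| ≤ B := by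
  set B := max |v 0| (K / -a) + 1
  have hv₀ : |v 0| < B := by grind
  have hKB : K < -a * B := by
    have : K / -a < B := by grind
    rwa [div_lt_iff₀ (neg_pos.2 ha), mul_comm] at this
  have hB : 0 < B := pos_of_mul_pos_right (((hG 0 le_rfl).1.trans (hG 0 le_rfl).2).trans_lt hKB)
    (neg_nonneg.2 ha.le)
  refine ⟨B, hB, fun t ht => abs_le.2 ⟨?_, ?_⟩⟩
  · refine image_le_of_hasDerivAt_lt_of_eq_Ici (fun s _ => hasDerivAt_const s (-B)) hv
      (neg_le_of_abs_le hv₀.le) (fun s hs hvs => ?_) t ht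
    rw [← hvs]
    linarith [(hG s hs).2]
  · refine image_le_of_hasDerivAt_lt_of_eq_Ici hv (fun s _ => hasDerivAt_const s B)
      (le_of_abs_le hv₀.le) (fun s hs hvs => ?_) t ht
    rw [hvs]
    nlinarith [(hG s hs).1]

theorem abs_sub_one_le_mul_abs_rpow_neg_sub_one {α R x : ℝ} (hα : 0 < α) (hR : 1 ≤ R)
    (hx₀ : 0 < x) (hxR : x ≤ R) :
    |x - 1| ≤ α⁻¹ * R ^ (1 + α) * |x ^ (-α) - 1| := by
  have hRα : 0 < R ^ (-α) := rpow_pos_of_pos (by linarith) _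
  have h1 : (1 : ℝ) ∈ Ici (R ^ (-α)) := rpow_le_one_of_one_le_of_nonpos hR (by linarith)
  have hx : x ^ (-α) ∈ Ici (R ^ (-α)) := rpow_le_rpow_of_nonpos hx₀ hxR (by linarith)
  have hderiv : ∀ y ∈ Ici (R ^ (-α)), HasDerivWithinAt (fun y : ℝ => y ^ (-α⁻¹))
      (-α⁻¹ * y ^ (-α⁻¹ - 1)) (Ici (R ^ (-α))) y := fun y hy =>
    (hasDerivAt_rpow_const (Or.inl (hRα.trans_le hy).ne')).hasDerivWithinAt
  have hbound : ∀ y ∈ Ici (R ^ (-α)), ‖-α⁻¹ * y ^ (-α⁻¹ - 1)‖ ≤ α⁻¹ * R ^ (1 + α) := by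
    intro y hy
    have hy₀ : 0 < y := hRα.trans_le hy
    have hpow : (R ^ (-α)) ^ (-α⁻¹ - 1) = R ^ (1 + α) := by
      rw [← rpow_mul (by linarith)]
      congr 1
      field_simp
      ring
    rw [norm_eq_abs, abs_mul, abs_neg, abs_of_pos (inv_pos.2 hα),
      abs_of_pos (rpow_pos_of_pos hy₀ _), ← hpow]
    exact mul_le_mul_of_nonneg_left
      (rpow_le_rpow_of_nonpos hRα hy (by linarith [inv_pos.2 hα])) (inv_pos.2 hα).le
  have hmvt := Convex.norm_image_sub_le_of_norm_hasDerivWithin_le hderiv hbound (convex_Ici _) h1 hx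
  rwa [← rpow_mul hx₀.le, neg_mul_neg, mul_inv_cancel₀ hα.ne', rpow_one,
    one_rpow, norm_eq_abs, norm_eq_abs] at hmvt

noncomputable def logisticRHS (C₁ C₂ α β : ℝ) (d : ℕ) (t x : ℝ) : ℝ :=
  C₁ * x * (1 - x ^ α) + C₂ * x ^ (d + 1) * exp (-β * t)

def IsLogisticSolution (C₁ C₂ α β : ℝ) (d : ℕ) (k : ℝ → ℝ) : Prop :=
  ∀ t ≥ 0, HasDerivAt k (logisticRHS C₁ C₂ α β d t (k t)) t

section

variable {C₁ C₂ α β : ℝ} {d : ℕ}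

theorem logisticRHS_le_of_le_one (hC₁ : 0 ≤ C₁) (hC₂ : 0 ≤ C₂) {t x : ℝ} (hβt : 0 ≤ β * t)
    (hx₀ : 0 ≤ x) (hx₁ : x ≤ 1) :
    logisticRHS C₁ C₂ α β d t x ≤ (C₁ + C₂) * x := by
  have hpow : x ^ (d + 1) ≤ x := pow_le_of_le_one hx₀ hx₁ d.succ_ne_zero
  have hexp : exp (-β * t) ≤ 1 := exp_le_one_iff.2 (by linarith)
  have hlog : C₁ * x * (1 - x ^ α) ≤ C₁ * x :=
    mul_le_of_le_one_right (by positivity) (by linarith [rpow_nonneg hx₀ α])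
  have hforce : C₂ * x ^ (d + 1) * exp (-β * t) ≤ C₂ * x :=
    (mul_le_of_le_one_right (by positivity) hexp).trans (mul_le_mul_of_nonneg_left hpow hC₂)
  rw [logisticRHS]
  linarith

theorem logisticRHS_pos (hC₁ : 0 < C₁) (hC₂ : 0 ≤ C₂) (hα : 0 < α) {t x : ℝ} (hx₀ : 0 < x)
    (hx₁ : x < 1) : 0 < logisticRHS C₁ C₂ α β d t x := by
  have : 0 < C₁ * x * (1 - x ^ α) :=
    mul_pos (mul_pos hC₁ hx₀) (sub_pos.2 (rpow_lt_one hx₀.le hx₁ hα))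
  rw [logisticRHS]
  positivity

theorem exists_forall_ge_logisticRHS_two_neg (hC₁ : 0 < C₁) (hα : 0 < α) (hβ : 0 < β) :
    ∃ T ≥ 0, ∀ t ≥ T, logisticRHS C₁ C₂ α β d t 2 < 0 := by
  have hlim : Tendsto (fun t => logisticRHS C₁ C₂ α β d t 2) atTop
      (𝓝 (C₁ * 2 * (1 - 2 ^ α) + C₂ * 2 ^ (d + 1) * 0)) := by
    refine tendsto_const_nhds.add (tendsto_const_nhds.mul ?_)
    simpa only [neg_mul, Function.comp_def, id] using
      tendsto_exp_neg_atTop_nhds_zero.comp (tendsto_id.const_mul_atTop hβ)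
  have hneg : C₁ * 2 * (1 - 2 ^ α) + C₂ * 2 ^ (d + 1) * 0 < 0 := by
    have : (1 : ℝ) < 2 ^ α := one_lt_rpow one_lt_two hα
    nlinarith
  obtain ⟨T, hT⟩ := eventually_atTop.1 (hlim.eventually_lt_const hneg)
  exact ⟨max T 0, le_max_right _ _, fun t ht => hT t ((le_max_left _ _).trans ht)⟩

namespace IsLogisticSolution

variable {k : ℝ → ℝ}

theorem le_one_of_small (hk : IsLogisticSolution C₁ C₂ α β d k) (hC₁ : 0 ≤ C₁) (hC₂ : 0 ≤ C₂)
    (hβ : 0 ≤ β) (hk₀ : 0 < k 0) {T : ℝ} (hsmall : k 0 * exp ((C₁ + C₂ + 1) * T) ≤ 1) :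
    ∀ t ∈ Icc 0 T, k t ≤ 1 := by
  set L := C₁ + C₂ + 1
  have hbarrier_le : ∀ t ∈ Icc 0 T, k 0 * exp (L * t) ≤ 1 := fun t ht =>
    (mul_le_mul_of_nonneg_left (exp_le_exp.2 (mul_le_mul_of_nonneg_left ht.2 (by positivity)))
      hk₀.le).trans hsmall
  have hgrowth : ∀ t ∈ Icc 0 T, k t ≤ k 0 * exp (L * t) := by
    refine image_le_of_hasDerivAt_lt_of_eq_Icc hk
      (fun t _ => ((hasDerivAt_id' t).const_mul L).exp.const_mul (k 0)) (by simp) ?_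
    intro t ht hkt
    have hpos : 0 < k t := by rw [hkt]; positivity
    calc logisticRHS C₁ C₂ α β d t (k t) ≤ (C₁ + C₂) * k t :=
          logisticRHS_le_of_le_one hC₁ hC₂ (mul_nonneg hβ ht.1) hpos.le
            (hkt ▸ hbarrier_le t (Ico_subset_Icc_self ht))
      _ < L * k t := by linarith
      _ = _ := by rw [hkt]; ring
  exact fun t ht => (hgrowth t ht).trans (hbarrier_le t ht)

theorem le_two_of_small (hk : IsLogisticSolution C₁ C₂ α β d k) (hC₁ : 0 ≤ C₁) (hC₂ : 0 ≤ C₂)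
    (hβ : 0 ≤ β) (hk₀ : 0 < k 0) {T : ℝ} (hT₀ : 0 ≤ T)
    (hT : ∀ t ≥ T, logisticRHS C₁ C₂ α β d t 2 < 0)
    (hsmall : k 0 * exp ((C₁ + C₂ + 1) * T) ≤ 1) :
    ∀ t ≥ 0, k t ≤ 2 := by
  have hle_one := hk.le_one_of_small hC₁ hC₂ hβ hk₀ hsmall
  have hlate : ∀ t ≥ T, k t ≤ 2 :=
    image_le_of_hasDerivAt_lt_of_eq_Ici (fun t ht => hk t (hT₀.trans ht))
      (fun t _ => hasDerivAt_const t 2) ((hle_one T ⟨hT₀, le_rfl⟩).trans one_le_two)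
      (fun t ht hkt => by rw [hkt]; exact hT t ht)
  intro t ht
  rcases le_total t T with htT | hTt
  · exact (hle_one t ⟨ht, htT⟩).trans one_le_two
  · exact hlate t hTt

theorem initial_le (hk : IsLogisticSolution C₁ C₂ α β d k) (hC₁ : 0 < C₁) (hC₂ : 0 ≤ C₂)
    (hα : 0 < α) (hk₀ : 0 < k 0) (hk₁ : k 0 < 1) : ∀ t ≥ 0, k 0 ≤ k t :=
  image_le_of_hasDerivAt_lt_of_eq_Ici (fun t _ => hasDerivAt_const t (k 0)) hk le_rfl
    fun _ _ hkt => by rw [← hkt]; exact logisticRHS_pos hC₁ hC₂ hα hk₀ hk₁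

theorem hasDerivAt_rpow_neg (hk : IsLogisticSolution C₁ C₂ α β d k) {t : ℝ} (ht : 0 ≤ t)
    (hkt : 0 < k t) :
    HasDerivAt (fun s => k s ^ (-α))
      (-(α * C₁) * (k t ^ (-α) - 1) - α * C₂ * k t ^ d * k t ^ (-α) * exp (-β * t)) t := by
  refine ((hk t ht).rpow_const (Or.inl hkt.ne')).congr_deriv ?_
  have h₁ : k t ^ (-α - 1) * k t = k t ^ (-α) := by
    rw [← rpow_add_one hkt.ne', sub_add_cancel]
  have h₂ : k t ^ (-α) * k t ^ α = 1 := by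
    rw [← rpow_add hkt, neg_add_cancel, rpow_zero]
  have h₃ : k t ^ (-α - 1) * k t ^ (d + 1) = k t ^ d * k t ^ (-α) := by
    rw [← rpow_natCast, ← rpow_natCast, ← rpow_add hkt, ← rpow_add hkt]
    push_cast
    ring_nf
  rw [logisticRHS]
  linear_combination (-(α * C₁) * (1 - k t ^ α)) * h₁ + α * C₁ * h₂
    - α * C₂ * exp (-β * t) * h₃

theorem exists_abs_sub_one_le (hk : IsLogisticSolution C₁ C₂ α β d k) (hC₂ : 0 ≤ C₂) (hα : 0 < α)
    {ε m R : ℝ} (hεβ : ε ≤ β) (hεC₁ : ε < α * C₁) (hm : 0 < m) (hR : 1 ≤ R)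
    (hlow : ∀ t ≥ 0, m ≤ k t) (hup : ∀ t ≥ 0, k t ≤ R) :
    ∃ C > 0, ∀ t ≥ 0, |k t - 1| ≤ C * exp (-ε * t) := by
  set v : ℝ → ℝ := fun t => (k t ^ (-α) - 1) * exp (ε * t)
  set G : ℝ → ℝ := fun t => α * C₂ * k t ^ d * k t ^ (-α) * exp ((ε - β) * t)
  have hkpos : ∀ t ≥ 0, 0 < k t := fun t ht => hm.trans_le (hlow t ht)
  have hv : ∀ t ≥ 0, HasDerivAt v ((ε - α * C₁) * v t - G t) t := by
    intro t ht
    refine (((hk.hasDerivAt_rpow_neg ht (hkpos t ht)).sub_const 1).mul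
      ((hasDerivAt_id' t).const_mul ε).exp).congr_deriv ?_
    simp only [v, G, sub_mul, exp_sub, neg_mul, exp_neg]
    field_simp
    ring
  have hG : ∀ t ≥ 0, 0 ≤ G t ∧ G t ≤ α * C₂ * R ^ d * m ^ (-α) := by
    intro t ht
    have hkt := hkpos t ht
    refine ⟨by positivity, ?_⟩
    have hexp : exp ((ε - β) * t) ≤ 1 :=
      exp_le_one_iff.2 (mul_nonpos_of_nonpos_of_nonneg (by linarith) ht)
    calc α * C₂ * k t ^ d * k t ^ (-α) * exp ((ε - β) * t)
        ≤ α * C₂ * R ^ d * m ^ (-α) * 1 := by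
          gcongr α * C₂ * ?_ * ?_ * ?_
          · exact pow_le_pow_left₀ hkt.le (hup t ht) d
          · exact rpow_le_rpow_of_nonpos hm (hlow t ht) (by linarith)
      _ = α * C₂ * R ^ d * m ^ (-α) := mul_one _
  obtain ⟨B, hB, hvB⟩ := exists_pos_abs_le_of_hasDerivAt_linear (by linarith) hv hG
  refine ⟨α⁻¹ * R ^ (1 + α) * B, by positivity, fun t ht => ?_⟩
  have hu : |k t ^ (-α) - 1| = |v t| * exp (-ε * t) := by
    rw [← abs_of_pos (exp_pos (-ε * t)), ← abs_mul, mul_assoc, ← exp_add, neg_mul,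
      add_neg_cancel, exp_zero, mul_one]
  calc |k t - 1| ≤ α⁻¹ * R ^ (1 + α) * |k t ^ (-α) - 1| :=
        abs_sub_one_le_mul_abs_rpow_neg_sub_one hα hR (hkpos t ht) (hup t ht)
    _ ≤ α⁻¹ * R ^ (1 + α) * B * exp (-ε * t) := by
        rw [hu, mul_assoc _ B]
        gcongr
        exact hvB t ht

end IsLogisticSolution

end

theorem stmt_7_general (d : ℕ) (C₁ C₂ α β : ℝ)
    (hC₁ : 0 < C₁) (hC₂ : 0 < C₂) (hα : 0 < α) (hβ : 0 < β) :
    ∃ δ > (0 : ℝ), ∀ k : ℝ → ℝ,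
      (∀ t ≥ (0 : ℝ), HasDerivAt k
        (C₁ * k t * (1 - k t ^ α) + C₂ * k t ^ (d + 1) * Real.exp (-β * t)) t) →
      0 < k 0 → k 0 < δ →
      ∃ C > (0 : ℝ), ∀ t ≥ (0 : ℝ),
        |k t - 1| ≤ C * Real.exp (-(min β (C₁ * α / 2)) * t) := by
  obtain ⟨T, hT₀, hT⟩ := exists_forall_ge_logisticRHS_two_neg (C₂ := C₂) (d := d) hC₁ hα hβ
  set L := C₁ + C₂ + 1
  have hLT : 0 ≤ L * T := mul_nonneg (by positivity) hT₀
  refine ⟨exp (-(L * T)), exp_pos _, fun k hk hk₀ hkδ => ?_⟩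
  have hsol : IsLogisticSolution C₁ C₂ α β d k := hk
  have hsmall : k 0 * exp (L * T) ≤ 1 :=
    calc k 0 * exp (L * T) ≤ exp (-(L * T)) * exp (L * T) := by gcongr
      _ = 1 := by rw [← exp_add, neg_add_cancel, exp_zero]
  have hk₁ : k 0 < 1 := hkδ.trans_le (exp_le_one_iff.2 (neg_nonpos.2 hLT))
  have hrate : min β (C₁ * α / 2) < α * C₁ :=
    (min_le_right _ _).trans_lt (by nlinarith [mul_pos hC₁ hα])
  exact hsol.exists_abs_sub_one_le hC₂.le hα (min_le_left _ _) hrate hk₀ one_le_two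
    (hsol.initial_le hC₁ hC₂.le hα hk₀ hk₁)
    (hsol.le_two_of_small hC₁.le hC₂.le hβ.le hk₀ hT₀ hT hsmall)

/-- ODE lemma — for small initial data the solution of
`k' = C₁ k (1-k^α) + C₂ k^{d+1} e^{-βt}` converges exponentially to 1. -/
theorem stmt_7 (d : ℕ) (hd : 1 ≤ d) (C₁ C₂ α β : ℝ)
    (hC₁ : 0 < C₁) (hC₂ : 0 < C₂) (hα : 0 < α) (hβ : 0 < β) :
    ∃ δ > (0 : ℝ), ∀ k : ℝ → ℝ,
      (∀ t ≥ (0 : ℝ), HasDerivAt k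
        (C₁ * k t * (1 - k t ^ α) + C₂ * k t ^ (d + 1) * Real.exp (-β * t)) t) →
      0 < k 0 → k 0 < δ →
      ∃ C > (0 : ℝ), ∀ t ≥ (0 : ℝ),
        |k t - 1| ≤ C * Real.exp (-(min β (C₁ * α / 2)) * t) :=
  stmt_7_general d C₁ C₂ α β hC₁ hC₂ hα hβ
end

section
/- Let f, g be nonnegative radially symmetric integrable functions on ℝ^d with f ≺ g (i.e., ∫_{B(0,r)} f ≤ ∫_{B(0,r)} g for all r), and let W ∈ L^1(ℝ^d) be nonnegative, radially symmetric and radially decreasing. Then for every r > 0, ∫_{B(0,r)} (f*W)(x) dx ≤ ∫_{B(0,r)} (g*W)(x) dx + ‖W‖_{L^1} · sup_{s>0} (∫_{B(0,s)} f - ∫_{B(0,s)} g) — in particular, since the sup is ≤ 0, ∫_{B(0,r)} f*W dx ≤ ∫_{B(0,r)} g*W dx. -/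
/-!
By Fubini, `∫_{B(0,r)} f ⋆ W = ∫ f K` with `K y = ∫_{B(-y,r)} W`. The kernel `K` is radially
decreasing: if `‖c‖ ≤ ‖c'‖`, the reflection in the perpendicular bisector of `c` and `c'` swaps the
lunes `B(c',r) \ B(c,r)` and `B(c,r) \ B(c',r)` and moves every point of the latter away from the
origin, so the far lune carries less `W`-mass. By the layer-cake formula,
`∫ f K = ∫₀^∞ (∫_{K > t} f) dt`, and each superlevel set `{K > t}` is a centred open ball, a
centred closed ball (a decreasing limit of open balls) or the whole space, where `f ≺ g` applies.
-/

open MeasureTheory Metric Set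
open scoped Convolution RealInnerProductSpace

section NormLowerSet
variable {E : Type*} [SeminormedAddGroup E]

def IsNormLowerSet (S : Set E) : Prop := ∀ ⦃x y : E⦄, ‖x‖ ≤ ‖y‖ → y ∈ S → x ∈ S

def RadiallyAntitone {β : Type*} [Preorder β] (K : E → β) : Prop :=
  ∀ x y : E, ‖x‖ ≤ ‖y‖ → K y ≤ K x

lemma RadiallyAntitone.isNormLowerSet_setOf_lt {β : Type*} [Preorder β] {K : E → β}
    (hK : RadiallyAntitone K) (t : β) : IsNormLowerSet {x | t < K x} :=
  fun x y hxy hy => lt_of_lt_of_le hy (hK x y hxy)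

theorem IsNormLowerSet.eq_univ_or_ball_or_closedBall {S : Set E} (hS : IsNormLowerSet S) :
    S = univ ∨ ∃ ρ, S = ball 0 ρ ∨ S = closedBall 0 ρ := by
  by_cases hbdd : BddAbove (norm '' S)
  · right
    rcases S.eq_empty_or_nonempty with rfl | hne
    · exact ⟨0, .inl ball_zero.symm⟩
    set ρ := sSup (norm '' S)
    have hle : ∀ y ∈ S, ‖y‖ ≤ ρ := fun y hy => le_csSup hbdd ⟨y, hy, rfl⟩
    refine ⟨ρ, ?_⟩
    by_cases hρ : ∃ y ∈ S, ‖y‖ = ρ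
    · obtain ⟨y, hy, hyρ⟩ := hρ
      refine .inr <| Subset.antisymm (fun x hx => mem_closedBall_zero_iff.2 (hle x hx)) ?_
      exact fun x hx => hS ((mem_closedBall_zero_iff.1 hx).trans hyρ.ge) hy
    · refine .inl <| Subset.antisymm ?_ ?_
      · exact fun x hx => mem_ball_zero_iff.2 <| (hle x hx).lt_of_ne fun h => hρ ⟨x, hx, h⟩
      · intro x hx
        obtain ⟨_, ⟨y, hy, rfl⟩, hxy⟩ :=
          exists_lt_of_lt_csSup (hne.image _) (mem_ball_zero_iff.1 hx)
        exact hS hxy.le hy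
  · left
    refine eq_univ_of_forall fun x => ?_
    obtain ⟨_, ⟨y, hy, rfl⟩, hxy⟩ := not_bddAbove_iff.1 hbdd ‖x‖
    exact hS hxy.le hy

variable [MeasurableSpace E] [OpensMeasurableSpace E]

theorem IsNormLowerSet.measurableSet {S : Set E} (hS : IsNormLowerSet S) : MeasurableSet S := by
  obtain rfl | ⟨ρ, rfl | rfl⟩ := hS.eq_univ_or_ball_or_closedBall
  exacts [MeasurableSet.univ, measurableSet_ball, measurableSet_closedBall]

theorem RadiallyAntitone.measurable {K : E → ℝ} (hK : RadiallyAntitone K) : Measurable K :=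
  measurable_of_Ioi fun t => (hK.isNormLowerSet_setOf_lt t).measurableSet

theorem IsNormLowerSet.measure_le {μ ν : Measure E} [IsFiniteMeasure ν]
    (hμν : ∀ r, μ (ball 0 r) ≤ ν (ball 0 r)) {S : Set E} (hS : IsNormLowerSet S) :
    μ S ≤ ν S := by
  obtain rfl | ⟨ρ, rfl | rfl⟩ := hS.eq_univ_or_ball_or_closedBall
  · have hmono : Monotone fun n : ℕ => ball (0 : E) n := fun m n hmn =>
      ball_subset_ball (by exact_mod_cast hmn)
    have hlim (m : Measure E) := tendsto_measure_iUnion_atTop (μ := m) hmono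
    rw [iUnion_ball_nat] at hlim
    exact le_of_tendsto_of_tendsto' (hlim μ) (hlim ν) fun n => hμν n
  · exact hμν ρ
  · have hlim (m : Measure E) (hm : ∀ r, m (ball 0 r) ≠ ⊤) :=
      tendsto_measure_biInter_gt (μ := m) (s := ball (0 : E)) (a := ρ)
        (fun r _ => measurableSet_ball.nullMeasurableSet)
        (fun i j _ hij => ball_subset_ball hij) ⟨ρ + 1, by linarith, hm _⟩
    rw [biInter_gt_ball] at hlim
    have hν (r : ℝ) : ν (ball 0 r) ≠ ⊤ := measure_ne_top ν _
    exact le_of_tendsto_of_tendsto' (hlim μ fun r => ne_top_of_le_ne_top (hν r) (hμν r))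
      (hlim ν hν) fun r => hμν r

theorem integral_le_integral_of_measure_ball_le {μ ν : Measure E} [IsFiniteMeasure ν]
    (hμν : ∀ r, μ (ball 0 r) ≤ ν (ball 0 r)) {K : E → ℝ} (hK_nonneg : 0 ≤ K)
    (hK : RadiallyAntitone K) : ∫ x, K x ∂μ ≤ ∫ x, K x ∂ν := by
  have hKm := hK.measurable
  have hKν : Integrable K ν := .of_bound hKm.aestronglyMeasurable (K 0) <| ae_of_all _ fun x => by
    simpa [Real.norm_of_nonneg (hK_nonneg x)] using hK 0 x (by simp)
  rw [integral_eq_lintegral_of_nonneg_ae (ae_of_all _ hK_nonneg) hKm.aestronglyMeasurable,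
    integral_eq_lintegral_of_nonneg_ae (ae_of_all _ hK_nonneg) hKm.aestronglyMeasurable]
  refine ENNReal.toReal_mono ((lintegral_ofReal_ne_top_iff_integrable
    hKm.aestronglyMeasurable (ae_of_all _ hK_nonneg)).2 hKν) ?_
  rw [lintegral_eq_lintegral_meas_lt μ (ae_of_all _ hK_nonneg) hKm.aemeasurable,
    lintegral_eq_lintegral_meas_lt ν (ae_of_all _ hK_nonneg) hKm.aemeasurable]
  exact lintegral_mono fun t => (hK.isNormLowerSet_setOf_lt t).measure_le hμν

end NormLowerSet

section Reflection
variable {E : Type*} [NormedAddCommGroup E] [InnerProductSpace ℝ E]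

noncomputable def reflectionPerpBisector (c c' : E) : E ≃ᵢ E :=
  (IsometryEquiv.subRight c).trans <|
    (Submodule.reflection (ℝ ∙ (c' - c))ᗮ).toIsometryEquiv.trans (IsometryEquiv.addRight c')

lemma reflectionPerpBisector_apply (c c' x : E) :
    reflectionPerpBisector c c' x =
      x + (1 - 2 * ⟪c' - c, x - c⟫ / ‖c' - c‖ ^ 2) • (c' - c) := by
  simp only [reflectionPerpBisector, IsometryEquiv.trans_apply, IsometryEquiv.subRight_apply,
    LinearIsometryEquiv.coe_toIsometryEquiv, Submodule.reflection_orthogonal_apply,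
    Submodule.reflection_singleton_apply, IsometryEquiv.addRight_apply, RCLike.ofReal_real_eq_id,
    id]
  module

@[simp]
lemma reflectionPerpBisector_left (c c' : E) : reflectionPerpBisector c c' c = c' := by
  simp [reflectionPerpBisector]

@[simp]
lemma reflectionPerpBisector_right (c c' : E) : reflectionPerpBisector c c' c' = c := by
  simp [reflectionPerpBisector, Submodule.reflection_orthogonalComplement_singleton_eq_neg]

lemma norm_le_norm_reflectionPerpBisector {c c' x : E} (hc : ‖c‖ ≤ ‖c'‖)
    (hx : dist x c ≤ dist x c') : ‖x‖ ≤ ‖reflectionPerpBisector c c' x‖ := by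
  rcases eq_or_ne c' c with rfl | hne
  · simp [reflectionPerpBisector_apply]
  rw [reflectionPerpBisector_apply]
  set u := c' - c
  set s := 1 - 2 * ⟪u, x - c⟫ / ‖u‖ ^ 2
  have hu : 0 < ‖u‖ ^ 2 := by positivity [sub_ne_zero.2 hne]
  have hsu : s * ‖u‖ ^ 2 = ‖u‖ ^ 2 - 2 * ⟪u, x - c⟫ := by
    simp only [s, sub_mul, one_mul, div_mul_cancel₀ _ hu.ne']
  have hs : 0 ≤ s := by
    rw [dist_eq_norm, dist_eq_norm, show x - c' = (x - c) - u by simp [u]] at hx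
    have := pow_le_pow_left₀ (norm_nonneg _) hx 2
    rw [norm_sub_sq_real (x - c), real_inner_comm] at this
    nlinarith
  have hcu : 0 ≤ ‖u‖ ^ 2 + 2 * ⟪u, c⟫ := by
    have := pow_le_pow_left₀ (norm_nonneg _) hc 2
    rw [show c' = c + u by simp [u], norm_add_sq_real, real_inner_comm] at this
    linarith
  refine le_of_pow_le_pow_left₀ two_ne_zero (norm_nonneg _) ?_
  have : ‖x + s • u‖ ^ 2 = ‖x‖ ^ 2 + s * (‖u‖ ^ 2 + 2 * ⟪u, c⟫) := by
    rw [norm_add_sq_real, real_inner_smul_right, norm_smul, mul_pow, Real.norm_eq_abs, sq_abs]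
    rw [inner_sub_right] at hsu
    rw [real_inner_comm]
    linear_combination s * hsu
  rw [this]
  nlinarith

lemma measurePreserving_reflectionPerpBisector [FiniteDimensional ℝ E] [MeasurableSpace E]
    [BorelSpace E] (c c' : E) :
    MeasurePreserving (reflectionPerpBisector c c') volume volume :=
  (measurePreserving_add_right volume c').comp <|
    (Submodule.reflection (ℝ ∙ (c' - c))ᗮ).measurePreserving.comp
      (measurePreserving_sub_right volume c)

theorem RadiallyAntitone.setIntegral_ball_le_of_norm_le [FiniteDimensional ℝ E]
    [MeasurableSpace E] [BorelSpace E] {W : E → ℝ} (hW : RadiallyAntitone W) (hW_int : Integrable W)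
    {c c' : E} (hc : ‖c‖ ≤ ‖c'‖) (r : ℝ) :
    ∫ x in ball c' r, W x ≤ ∫ x in ball c r, W x := by
  set σ := reflectionPerpBisector c c'
  have hσ := measurePreserving_reflectionPerpBisector (E := E) c c'
  have hemb : MeasurableEmbedding σ := σ.toHomeomorph.measurableEmbedding
  have hdist (x : E) : dist (σ x) c' = dist x c ∧ dist (σ x) c = dist x c' := by
    simpa [σ] using And.intro (σ.dist_eq x c) (σ.dist_eq x c')
  have hpre : σ ⁻¹' (ball c' r \ ball c r) = ball c r \ ball c' r := by
    ext x
    simp only [mem_preimage, mem_sdiff, mem_ball, hdist]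
  have hlune : ∫ x in ball c' r \ ball c r, W x ≤ ∫ x in ball c r \ ball c' r, W x := by
    rw [← hσ.setIntegral_preimage_emb hemb, hpre]
    refine setIntegral_mono_on ((hσ.integrable_comp_emb hemb).2 hW_int).integrableOn
      hW_int.integrableOn (measurableSet_ball.diff measurableSet_ball) fun x hx => hW _ _ ?_
    refine norm_le_norm_reflectionPerpBisector hc ?_
    simp only [mem_sdiff, mem_ball, not_lt] at hx
    linarith
  rw [← integral_inter_add_sdiff measurableSet_ball hW_int.integrableOn,
    ← integral_inter_add_sdiff (s := ball c r) measurableSet_ball hW_int.integrableOn, inter_comm]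
  gcongr

end Reflection

theorem setIntegral_convolution_lsmul {G : Type*} [AddGroup G] [MeasurableSpace G]
    [MeasurableAdd₂ G] [MeasurableNeg G] {μ : Measure G} [SFinite μ] [μ.IsAddRightInvariant]
    {f W : G → ℝ} (hf : Integrable f μ) (hW : Integrable W μ) (s : Set G) :
    ∫ x in s, convolution f W (ContinuousLinearMap.lsmul ℝ ℝ) μ x ∂μ =
      ∫ y, f y * ∫ x in s, W (x - y) ∂μ ∂μ := by
  have hint : Integrable (fun p : G × G => f p.2 * W (p.1 - p.2)) ((μ.restrict s).prod μ) := by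
    rw [Measure.restrict_prod_eq_prod_univ]
    exact (hf.convolution_integrand (ContinuousLinearMap.lsmul ℝ ℝ) hW).restrict
  simp only [convolution_def, ContinuousLinearMap.lsmul_apply, smul_eq_mul]
  rw [integral_integral_swap hint]
  simp only [integral_const_mul]

theorem setIntegral_ball_zero_comp_sub {E : Type*} [NormedAddCommGroup E] [MeasurableSpace E]
    [MeasurableAdd E] {μ : Measure E} [μ.IsAddRightInvariant] (W : E → ℝ) (y : E) (r : ℝ) :
    ∫ x in ball 0 r, W (x - y) ∂μ = ∫ x in ball (-y) r, W x ∂μ := by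
  have hpre : (· - y) ⁻¹' ball (-y) r = ball (0 : E) r := by
    ext x; simp [dist_eq_norm]
  rw [← hpre, (measurePreserving_sub_right μ y).setIntegral_preimage_emb
    (measurableEmbedding_subRight y)]

theorem integral_withDensity_ofReal {X : Type*} [MeasurableSpace X] {μ : Measure X}
    {f : X → ℝ} (hf_nonneg : ∀ x, 0 ≤ f x) (hf : AEMeasurable f μ) (g : X → ℝ) :
    ∫ x, g x ∂μ.withDensity (fun x => ENNReal.ofReal (f x)) = ∫ x, f x * g x ∂μ := by
  rw [integral_withDensity_eq_integral_toReal_smul₀ hf.ennreal_ofReal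
    (ae_of_all _ fun _ => ENNReal.ofReal_lt_top)]
  simp only [ENNReal.toReal_ofReal (hf_nonneg _), smul_eq_mul]

theorem measure_withDensity_ofReal_ball_le {E : Type*} [SeminormedAddGroup E] [MeasurableSpace E]
    [OpensMeasurableSpace E] {μ : Measure E} {f g : E → ℝ} (hf_nonneg : ∀ x, 0 ≤ f x)
    (hg_nonneg : ∀ x, 0 ≤ g x) (hf : Integrable f μ) (hg : Integrable g μ)
    (hfg : ∀ r : ℝ, ∫ x in ball 0 r, f x ∂μ ≤ ∫ x in ball 0 r, g x ∂μ) (r : ℝ) :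
    μ.withDensity (fun x => ENNReal.ofReal (f x)) (ball 0 r) ≤
      μ.withDensity (fun x => ENNReal.ofReal (g x)) (ball 0 r) := by
  rw [withDensity_apply _ measurableSet_ball, withDensity_apply _ measurableSet_ball,
    ← ofReal_integral_eq_lintegral_ofReal hf.integrableOn (ae_of_all _ hf_nonneg),
    ← ofReal_integral_eq_lintegral_ofReal hg.integrableOn (ae_of_all _ hg_nonneg)]
  exact ENNReal.ofReal_le_ofReal (hfg r)

theorem stmt_10_general (d : ℕ)
    (f g W : EuclideanSpace ℝ (Fin d) → ℝ)
    (hf_nonneg : ∀ x, 0 ≤ f x) (hg_nonneg : ∀ x, 0 ≤ g x)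
    (hf_int : Integrable f) (hg_int : Integrable g)
    (hfg : ∀ r : ℝ, (∫ x in Metric.ball (0 : EuclideanSpace ℝ (Fin d)) r, f x) ≤
      ∫ x in Metric.ball (0 : EuclideanSpace ℝ (Fin d)) r, g x)
    (hW_nonneg : ∀ x, 0 ≤ W x)
    (hW_int : Integrable W)
    (hW_dec : ∀ x y : EuclideanSpace ℝ (Fin d), ‖x‖ ≤ ‖y‖ → W y ≤ W x) :
    ∀ r > (0 : ℝ),
      (∫ x in Metric.ball (0 : EuclideanSpace ℝ (Fin d)) r, (f ⋆ W) x) ≤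
        ∫ x in Metric.ball (0 : EuclideanSpace ℝ (Fin d)) r, (g ⋆ W) x := by
  intro r _
  set K : EuclideanSpace ℝ (Fin d) → ℝ := fun y => ∫ x in ball 0 r, W (x - y)
  have hK_nonneg : 0 ≤ K := fun y => setIntegral_nonneg measurableSet_ball fun _ _ => hW_nonneg _
  have hK : RadiallyAntitone K := fun y z hyz => by
    simp only [K, setIntegral_ball_zero_comp_sub]
    exact RadiallyAntitone.setIntegral_ball_le_of_norm_le hW_dec hW_int (by simpa using hyz) r
  have hconv (h : EuclideanSpace ℝ (Fin d) → ℝ) (h_nonneg : ∀ x, 0 ≤ h x) (h_int : Integrable h) :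
      ∫ x in ball 0 r, (h ⋆ W) x = ∫ y, K y ∂volume.withDensity fun y => ENNReal.ofReal (h y) := by
    rw [setIntegral_convolution_lsmul h_int hW_int, integral_withDensity_ofReal h_nonneg
      h_int.aemeasurable]
  have := isFiniteMeasure_withDensity_ofReal hg_int.hasFiniteIntegral
  rw [hconv f hf_nonneg hf_int, hconv g hg_nonneg hg_int]
  exact integral_le_integral_of_measure_ball_le
    (measure_withDensity_ofReal_ball_le hf_nonneg hg_nonneg hf_int hg_int hfg) hK_nonneg hK

/-- convolution with a nonnegative radially decreasing kernel
preserves the mass-concentration order `f ≺ g`. -/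
theorem stmt_10 (d : ℕ) (hd : 1 ≤ d)
    (f g W : EuclideanSpace ℝ (Fin d) → ℝ)
    (hf_nonneg : ∀ x, 0 ≤ f x) (hg_nonneg : ∀ x, 0 ≤ g x)
    (hf_int : Integrable f) (hg_int : Integrable g)
    (hf_rad : ∀ x y : EuclideanSpace ℝ (Fin d), ‖x‖ = ‖y‖ → f x = f y)
    (hg_rad : ∀ x y : EuclideanSpace ℝ (Fin d), ‖x‖ = ‖y‖ → g x = g y)
    (hfg : ∀ r : ℝ, (∫ x in Metric.ball (0 : EuclideanSpace ℝ (Fin d)) r, f x) ≤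
      ∫ x in Metric.ball (0 : EuclideanSpace ℝ (Fin d)) r, g x)
    (hW_nonneg : ∀ x, 0 ≤ W x)
    (hW_int : Integrable W)
    (hW_rad : ∀ x y : EuclideanSpace ℝ (Fin d), ‖x‖ = ‖y‖ → W x = W y)
    (hW_dec : ∀ x y : EuclideanSpace ℝ (Fin d), ‖x‖ ≤ ‖y‖ → W y ≤ W x) :
    ∀ r > (0 : ℝ),
      (∫ x in Metric.ball (0 : EuclideanSpace ℝ (Fin d)) r, (f ⋆ W) x) ≤
        ∫ x in Metric.ball (0 : EuclideanSpace ℝ (Fin d)) r, (g ⋆ W) x :=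
  stmt_10_general d f g W hf_nonneg hg_nonneg hf_int hg_int hfg hW_nonneg hW_int hW_dec
end

section
/- Let d ≥ 3, m > 2 - 2/d, λ > 0. Define u_R = λ χ_{B(0,R)} / (c_d' R^d) where c_d' is the volume of the unit ball, and let W : ℝ^d → [0,∞) satisfy ∫_{B(0,R/2)} W dx ≥ c R^2 for all sufficiently large R (some c > 0). Then the energy E(u_R) = ∫ (1/(m-1)) u_R^m dx - (1/2)∫ u_R (u_R * W) dx satisfies E(u_R) ≤ C_1 λ^m R^{-d(m-1)} - C_2 λ^2 R^{-(d-2)} for large R with constants C_1, C_2 > 0, and hence E(u_R) < 0 for R sufficiently large (since d(m-1) > d-2 when m > 2 - 2/d). -/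
/-!
For the flat density `u = a 𝟙_{B(0,R)}` the entropy term is exactly `a^m |B(0,R)| / (m - 1)`,
of order `λ^m R^{-d(m-1)}`. A point `x ∈ B(0,R/2)` sees the whole ball `B(x,R/2) ⊆ B(0,R)`,
so translation invariance gives `(u ⋆ W)(x) ≥ a ∫_{B(0,R/2)} W ≥ a c R²`; integrating over
`B(0,R/2)` bounds the interaction term below by a multiple of `λ² R^{-(d-2)}`. Since
`d(m-1) > d-2` exactly when `m > 2 - 2/d`, the interaction wins for large `R`.
-/

open MeasureTheory Real Metric Filter Set Function ContinuousLinearMap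
open scoped Convolution Topology

theorem integrableOn_ball_of_frequently_integral_ne_zero {α F : Type*} [PseudoMetricSpace α]
    [MeasurableSpace α] [NormedAddCommGroup F] [NormedSpace ℝ F] {μ : Measure α} {f : α → F}
    {c : α} (h : ∃ᶠ r in atTop, ∫ x in ball c r, f x ∂μ ≠ 0) (r : ℝ) :
    IntegrableOn f (ball c r) μ := by
  obtain ⟨r', hr', hne⟩ := frequently_atTop.1 h r
  exact IntegrableOn.mono_set (Integrable.of_integral_ne_zero hne) (ball_subset_ball hr')

theorem integral_mul_indicator_const_rpow {α : Type*} [MeasurableSpace α] {μ : Measure α}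
    {s : Set α} (hs : MeasurableSet s) (c a : ℝ) {m : ℝ} (hm : m ≠ 0) :
    ∫ x, c * s.indicator (fun _ => a) x ^ m ∂μ = c * a ^ m * μ.real s := by
  have hcomp : (fun x => c * s.indicator (fun _ => a) x ^ m) = s.indicator fun _ => c * a ^ m :=
    (indicator_comp_of_zero (g := fun y : ℝ => c * y ^ m) (by simp [zero_rpow hm])).symm
  rw [hcomp, integral_indicator_const _ hs, smul_eq_mul, mul_comm]

theorem addHaar_real_ball_of_pos {E : Type*} [NormedAddCommGroup E] [NormedSpace ℝ E]
    [FiniteDimensional ℝ E] [MeasurableSpace E] [BorelSpace E] (μ : Measure E)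
    [μ.IsAddHaarMeasure] (x : E) {r : ℝ} (hr : 0 < r) :
    μ.real (ball x r) = r ^ Module.finrank ℝ E * μ.real (ball 0 1) := by
  simp [measureReal_def, Measure.addHaar_ball_of_pos μ x hr, ENNReal.toReal_ofReal, hr.le]

theorem addHaar_real_ball_pos {E : Type*} [NormedAddCommGroup E] [NormedSpace ℝ E]
    [FiniteDimensional ℝ E] [MeasurableSpace E] [BorelSpace E] (μ : Measure E)
    [μ.IsAddHaarMeasure] (x : E) {r : ℝ} (hr : 0 < r) : 0 < μ.real (ball x r) :=
  ENNReal.toReal_pos (measure_ball_pos μ x hr).ne' measure_ball_lt_top.ne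

theorem convolution_eq_convolution_indicator_ball {G : Type*} [SeminormedAddCommGroup G]
    [MeasurableSpace G] {μ : Measure G} {f g : G → ℝ} {r s : ℝ} {x : G}
    (hf : support f ⊆ ball 0 r) (hx : x ∈ ball 0 s) :
    (f ⋆[lsmul ℝ ℝ, μ] g) x = (f ⋆[lsmul ℝ ℝ, μ] (ball 0 (s + r)).indicator g) x := by
  simp only [convolution_lsmul, smul_eq_mul]
  refine integral_congr_ae (Eventually.of_forall fun t => ?_)
  by_cases ht : t ∈ support f
  · have hxt : x - t ∈ ball (0 : G) (s + r) := by
      rw [mem_ball_zero_iff] at hx ⊢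
      linarith [norm_sub_le x t, mem_ball_zero_iff.1 (hf ht)]
    simp only [indicator_of_mem hxt]
  · simp only [notMem_support.1 ht, zero_mul]

theorem eventually_mul_rpow_neg_lt {α β : ℝ} (hβα : β < α) (C₁ : ℝ) {C₂ : ℝ}
    (hC₂ : 0 < C₂) :
    ∀ᶠ R in atTop, C₁ * R ^ (-α) < C₂ * R ^ (-β) := by
  have h0 : Tendsto (fun R : ℝ => C₁ * R ^ (-(α - β))) atTop (𝓝 0) := by
    simpa using (tendsto_rpow_neg_atTop (sub_pos.2 hβα)).const_mul C₁
  filter_upwards [h0.eventually (gt_mem_nhds hC₂), eventually_gt_atTop 0] with R hR hR0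
  calc C₁ * R ^ (-α) = C₁ * R ^ (-(α - β)) * R ^ (-β) := by
        rw [mul_assoc, ← rpow_add hR0]; ring_nf
    _ < C₂ * R ^ (-β) := mul_lt_mul_of_pos_right hR (rpow_pos_of_pos hR0 _)

theorem one_lt_of_two_sub_two_div_lt {d m : ℝ} (hd : 2 ≤ d) (hm : 2 - 2 / d < m) : 1 < m := by
  have : 2 / d ≤ 1 := (div_le_one (by linarith)).2 hd
  linarith

theorem sub_two_lt_mul_sub_one {d m : ℝ} (hd : 0 < d) (hm : 2 - 2 / d < m) :
    d - 2 < d * (m - 1) := by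
  have := mul_lt_mul_of_pos_left hm hd
  rw [mul_sub, mul_div_cancel₀ _ hd.ne'] at this
  linarith

theorem rpow_div_mul_pow_mul {lam c R : ℝ} (hlam : 0 ≤ lam) (hc : 0 < c) (hR : 0 < R) (d : ℕ)
    (m : ℝ) :
    (lam / (c * R ^ d)) ^ m * (c * R ^ d) = c ^ (1 - m) * lam ^ m * R ^ (-(d * (m - 1))) := by
  have hRd : 0 < R ^ d := pow_pos hR d
  rw [div_rpow hlam (by positivity), mul_rpow hc.le hRd.le, ← rpow_natCast R d,
    ← rpow_mul hR.le, rpow_sub hc, rpow_one, show -((d : ℝ) * (m - 1)) = d - d * m by ring,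
    rpow_sub hR, rpow_natCast]
  field_simp

theorem sq_div_mul_pow_mul {lam c R : ℝ} (hR : 0 < R) (d : ℕ) :
    (lam / (c * R ^ d)) ^ 2 * R ^ 2 * (c * (R / 2) ^ d) =
      lam ^ 2 / (2 ^ d * c) * R ^ (-((d : ℝ) - 2)) := by
  rw [show -((d : ℝ) - 2) = 2 - d by ring, rpow_sub hR, rpow_natCast, rpow_two]
  rcases eq_or_ne c 0 with rfl | hc
  · simp
  field_simp
  rw [div_pow]
  field_simp

noncomputable def freeEnergy {G : Type*} [Sub G] [MeasurableSpace G] (μ : Measure G) (m : ℝ)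
    (W u : G → ℝ) : ℝ :=
  (∫ x, 1 / (m - 1) * u x ^ m ∂μ) - 1 / 2 * ∫ x, u x * (u ⋆[lsmul ℝ ℝ, μ] W) x ∂μ

section AddHaar

variable {E : Type*} [NormedAddCommGroup E] [NormedSpace ℝ E] [FiniteDimensional ℝ E]
  [MeasurableSpace E] [BorelSpace E] {μ : Measure E} [μ.IsAddHaarMeasure]

theorem mul_setIntegral_ball_le_convolution_indicator_ball {W : E → ℝ} (hW0 : ∀ x, 0 ≤ W x)
    (hW : Integrable W μ) {a R : ℝ} (ha : 0 ≤ a) {x : E} (hx : x ∈ ball 0 (R / 2)) :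
    a * ∫ y in ball 0 (R / 2), W y ∂μ ≤
      ((ball 0 R).indicator (fun _ => a) ⋆[lsmul ℝ ℝ, μ] W) x := by
  have hint : Integrable (fun t => (ball 0 R).indicator (fun _ => a) t * W (x - t)) μ := by
    have hball : MeasurableSet (ball (0 : E) R) := measurableSet_ball
    refine (((hW.comp_sub_left x).const_mul a).indicator hball).congr
      (Eventually.of_forall fun t => ?_)
    exact indicator_mul_left _ (fun _ => a) fun t => W (x - t)
  rw [convolution_lsmul, ← integral_indicator measurableSet_ball,
    ← integral_sub_left_eq_self _ μ x, ← integral_const_mul]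
  refine integral_mono (((hW.indicator measurableSet_ball).comp_sub_left x).const_mul a) hint
    fun t => ?_
  by_cases hxt : x - t ∈ ball (0 : E) (R / 2)
  · have ht : t ∈ ball (0 : E) R := by
      have := norm_sub_le x (x - t)
      rw [sub_sub_cancel] at this
      rw [mem_ball_zero_iff] at hx hxt ⊢
      linarith
    simp [indicator_of_mem hxt, indicator_of_mem ht]
  · rw [indicator_of_notMem hxt, mul_zero, smul_eq_mul]
    exact mul_nonneg (indicator_nonneg (fun _ _ => ha) t) (hW0 _)

theorem le_integral_indicator_ball_mul_convolution {W : E → ℝ} (hW0 : ∀ x, 0 ≤ W x)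
    (hW : Integrable W μ) {a : ℝ} (ha : 0 ≤ a) (R : ℝ) :
    a ^ 2 * (∫ y in ball 0 (R / 2), W y ∂μ) * μ.real (ball 0 (R / 2)) ≤
      ∫ x, (ball 0 R).indicator (fun _ => a) x *
        ((ball 0 R).indicator (fun _ => a) ⋆[lsmul ℝ ℝ, μ] W) x ∂μ := by
  set u : E → ℝ := (ball 0 R).indicator fun _ => a
  have hu0 : ∀ x, 0 ≤ u x := indicator_nonneg fun _ _ => ha
  have hu : Integrable u μ :=
    (integrableOn_const measure_ball_lt_top.ne).integrable_indicator measurableSet_ball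
  have hint : Integrable (fun x => u x * (u ⋆[lsmul ℝ ℝ, μ] W) x) μ :=
    (hu.integrable_convolution _ hW).bdd_mul hu.aestronglyMeasurable
      (Eventually.of_forall fun x => by
        simpa [Real.norm_of_nonneg ha] using norm_indicator_le_norm_self (fun _ => a) x)
  set I := ∫ y in ball 0 (R / 2), W y ∂μ
  calc a ^ 2 * I * μ.real (ball 0 (R / 2))
      = ∫ x, (ball 0 (R / 2)).indicator (fun _ => a * (a * I)) x ∂μ := by
        rw [integral_indicator_const _ measurableSet_ball, smul_eq_mul]; ring
    _ ≤ ∫ x, u x * (u ⋆[lsmul ℝ ℝ, μ] W) x ∂μ := by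
      refine integral_mono ((integrableOn_const measure_ball_lt_top.ne).integrable_indicator
        measurableSet_ball) hint fun x => ?_
      by_cases hx : x ∈ ball (0 : E) (R / 2)
      · have hxR : x ∈ ball (0 : E) R := by
          rw [mem_ball_zero_iff] at hx ⊢
          linarith [norm_nonneg x]
        rw [indicator_of_mem hx]
        simp only [u, indicator_of_mem hxR]
        exact mul_le_mul_of_nonneg_left
          (mul_setIntegral_ball_le_convolution_indicator_ball hW0 hW ha hx) ha
      · rw [indicator_of_notMem hx, convolution_lsmul]
        exact mul_nonneg (hu0 x) (integral_nonneg fun t => mul_nonneg (hu0 t) (hW0 _))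

theorem le_integral_indicator_ball_mul_convolution_of_integrableOn {W : E → ℝ}
    (hW0 : ∀ x, 0 ≤ W x) (hW : ∀ r, IntegrableOn W (ball 0 r) μ) {a R : ℝ} (ha : 0 ≤ a)
    (hR : 0 ≤ R) :
    a ^ 2 * (∫ y in ball 0 (R / 2), W y ∂μ) * μ.real (ball 0 (R / 2)) ≤
      ∫ x, (ball 0 R).indicator (fun _ => a) x *
        ((ball 0 R).indicator (fun _ => a) ⋆[lsmul ℝ ℝ, μ] W) x ∂μ := by
  -- only the values of `W` on `B(0, 2R)` enter, so `W` may be replaced by an integrable truncation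
  set u : E → ℝ := (ball 0 R).indicator fun _ => a
  have hsame : ∫ y in ball 0 (R / 2), (ball 0 (R + R)).indicator W y ∂μ =
      ∫ y in ball 0 (R / 2), W y ∂μ := by
    rw [setIntegral_indicator measurableSet_ball,
      inter_eq_left.2 (ball_subset_ball (by linarith))]
  have hconv : ∀ x, u x * (u ⋆[lsmul ℝ ℝ, μ] W) x =
      u x * (u ⋆[lsmul ℝ ℝ, μ] (ball 0 (R + R)).indicator W) x := fun x => by
    by_cases hx : x ∈ ball (0 : E) R
    · rw [convolution_eq_convolution_indicator_ball support_indicator_subset hx]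
    · simp only [u, indicator_of_notMem hx, zero_mul]
  rw [← hsame, integral_congr_ae (Eventually.of_forall hconv)]
  exact le_integral_indicator_ball_mul_convolution (indicator_nonneg fun y _ => hW0 y)
    ((hW _).integrable_indicator measurableSet_ball) ha R

theorem freeEnergy_indicator_ball_le {W : E → ℝ} (hW0 : ∀ x, 0 ≤ W x)
    (hW : ∀ r, IntegrableOn W (ball 0 r) μ) {m a R : ℝ} (hm : m ≠ 0) (ha : 0 ≤ a)
    (hR : 0 ≤ R) :
    freeEnergy μ m W ((ball 0 R).indicator fun _ => a) ≤
      1 / (m - 1) * a ^ m * μ.real (ball 0 R) -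
        1 / 2 * (a ^ 2 * (∫ y in ball 0 (R / 2), W y ∂μ) * μ.real (ball 0 (R / 2))) := by
  rw [freeEnergy, integral_mul_indicator_const_rpow measurableSet_ball _ _ hm]
  linarith [le_integral_indicator_ball_mul_convolution_of_integrableOn hW0 hW ha hR]

theorem freeEnergy_indicator_ball_le_rpow {W : E → ℝ} (hW0 : ∀ x, 0 ≤ W x)
    (hW : ∀ r, IntegrableOn W (ball 0 r) μ) {m lam cw R : ℝ} (hm : m ≠ 0) (hlam : 0 ≤ lam)
    (hR : 0 < R) (hWR : cw * R ^ 2 ≤ ∫ y in ball 0 (R / 2), W y ∂μ) {c : ℝ}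
    (hc : μ.real (ball 0 1) = c) {d : ℕ} (hd : Module.finrank ℝ E = d) :
    freeEnergy μ m W ((ball 0 R).indicator fun _ => lam / (c * R ^ d)) ≤
      c ^ (1 - m) / (m - 1) * lam ^ m * R ^ (-((d : ℝ) * (m - 1))) -
        cw / (2 ^ (d + 1) * c) * lam ^ 2 * R ^ (-((d : ℝ) - 2)) := by
  have hc0 : 0 < c := hc ▸ addHaar_real_ball_pos μ 0 one_pos
  have hvol : ∀ r > 0, μ.real (ball 0 r) = c * r ^ d := fun r hr => by
    rw [addHaar_real_ball_of_pos μ 0 hr, hc, hd, mul_comm]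
  have hk := rpow_div_mul_pow_mul hlam hc0 hR d m
  have hi := sq_div_mul_pow_mul (lam := lam) (c := c) hR d
  calc _ ≤ _ := freeEnergy_indicator_ball_le hW0 hW hm (by positivity) hR.le
    _ ≤ 1 / (m - 1) * (lam / (c * R ^ d)) ^ m * (c * R ^ d) -
          1 / 2 * ((lam / (c * R ^ d)) ^ 2 * (cw * R ^ 2) * (c * (R / 2) ^ d)) := by
      rw [hvol R hR, hvol (R / 2) (by positivity)]
      gcongr
    _ = _ := by
      rw [pow_succ]
      linear_combination 1 / (m - 1) * hk - cw / 2 * hi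

end AddHaar

/-- the free energy of the flat density `u_R = λ χ_{B(0,R)}/(c'_d R^d)`
is bounded by `C₁ λ^m R^{-d(m-1)} - C₂ λ² R^{-(d-2)}` and is negative for large `R`. -/
theorem stmt_15 (d : ℕ) (hd : 3 ≤ d) (m lam : ℝ)
    (hm : 2 - 2 / (d : ℝ) < m) (hlam : 0 < lam)
    (cball : ℝ)
    (hcball : cball = (volume (Metric.ball (0 : EuclideanSpace ℝ (Fin d)) 1)).toReal)
    (W : EuclideanSpace ℝ (Fin d) → ℝ)
    (hW_nonneg : ∀ x, 0 ≤ W x)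
    (hW : ∃ cw > (0 : ℝ), ∃ R₀ : ℝ, ∀ R ≥ R₀,
      cw * R ^ 2 ≤ ∫ x in Metric.ball (0 : EuclideanSpace ℝ (Fin d)) (R / 2), W x)
    (u : ℝ → EuclideanSpace ℝ (Fin d) → ℝ)
    (hu : ∀ R > (0 : ℝ), ∀ x, u R x =
      lam * Set.indicator (Metric.ball (0 : EuclideanSpace ℝ (Fin d)) R)
        (fun _ => (1 : ℝ)) x / (cball * R ^ d))
    (En : ℝ → ℝ)
    (hEn : ∀ R, En R = (∫ x, (1 / (m - 1)) * u R x ^ m)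
      - (1 / 2) * ∫ x, u R x * ((u R ⋆ W) x)) :
    (∃ C₁ > (0 : ℝ), ∃ C₂ > (0 : ℝ), ∃ R₁ : ℝ, ∀ R ≥ R₁,
      En R ≤ C₁ * lam ^ m * R ^ (-((d : ℝ) * (m - 1)))
        - C₂ * lam ^ 2 * R ^ (-((d : ℝ) - 2))) ∧
    (∃ R₂ : ℝ, ∀ R ≥ R₂, En R < 0) := by
  obtain ⟨cw, hcw, R₀, hWR⟩ := hW
  have hd2 : (2 : ℝ) ≤ d := by exact_mod_cast (by omega : 2 ≤ d)
  have hm1 : 1 < m := one_lt_of_two_sub_two_div_lt hd2 hm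
  have hexp : (d : ℝ) - 2 < d * (m - 1) := sub_two_lt_mul_sub_one (by linarith) hm
  have hcb : 0 < cball := hcball ▸ addHaar_real_ball_pos volume 0 one_pos
  have hWloc : ∀ r, IntegrableOn W (ball 0 r) := by
    refine integrableOn_ball_of_frequently_integral_ne_zero <|
      (tendsto_id.atTop_div_const two_pos).frequently <| Eventually.frequently ?_
    filter_upwards [eventually_ge_atTop R₀, eventually_gt_atTop 0] with R hR hR0
    exact ((mul_pos hcw (pow_pos hR0 2)).trans_le (hWR R hR)).ne'
  set C₁ := cball ^ (1 - m) / (m - 1)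
  set C₂ := cw / (2 ^ (d + 1) * cball)
  have hbound : ∀ R ≥ max R₀ 1, En R ≤ C₁ * lam ^ m * R ^ (-((d : ℝ) * (m - 1)))
      - C₂ * lam ^ 2 * R ^ (-((d : ℝ) - 2)) := by
    intro R hR
    have hR0 : 0 < R := by linarith [le_max_right R₀ 1]
    have hflat : u R = (ball 0 R).indicator fun _ => lam / (cball * R ^ d) := funext fun x => by
      rw [hu R hR0 x]
      by_cases hx : x ∈ ball (0 : EuclideanSpace ℝ (Fin d)) R <;> simp [hx]
    rw [hEn R, hflat]
    exact freeEnergy_indicator_ball_le_rpow hW_nonneg hWloc (by linarith : m ≠ 0) hlam.le hR0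
      (hWR R (le_of_max_le_left hR)) (hcball ▸ measureReal_def _ _) finrank_euclideanSpace_fin
  refine ⟨⟨C₁, by positivity, C₂, by positivity, _, hbound⟩, eventually_atTop.1 ?_⟩
  filter_upwards [eventually_ge_atTop (max R₀ 1),
    eventually_mul_rpow_neg_lt hexp (C₁ * lam ^ m) (by positivity : 0 < C₂ * lam ^ 2)]
    with R hR hlt
  linarith [hbound R hR]
end
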